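/- arXiv:2005.05533 — 4 statements merged into one kernel-verified Lean document; each statement's English description precedes it below -/
import Mathlib

section
/- Let ρ = Σ_k p_k |e_k⟩⟨e_k| ⊗ |f_k⟩⟨f_k| be a separable bipartite state. Then Σ_k p_k [ (ΔA)²_{|e_k⟩} + (ΔB)²_{|f_k⟩} ] ≤ Δ(A⊗I − I⊗B)²_ρ for any Hermitian observables A on H_A and B on H_B. -/
open Matrix Kronecker

noncomputable def varM {n : Type*} [Fintype n] (ρ A : Matrix n n ℂ) : ℝ :=
  ((ρ * A * A).trace).re - (((ρ * A).trace).re) ^ 2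

noncomputable def varV {n : Type*} [Fintype n] (ψ : n → ℂ) (A : Matrix n n ℂ) : ℝ :=
  (star ψ ⬝ᵥ (A * A).mulVec ψ).re - ((star ψ ⬝ᵥ A.mulVec ψ).re) ^ 2

def prodVec {a b : Type*} (e : a → ℂ) (f : b → ℂ) : a × b → ℂ := fun x => e x.1 * f x.2

/-!
On a product vector `e ⊗ f` the observable `C = A ⊗ 1 - 1 ⊗ B` has mean `⟨A⟩ - ⟨B⟩` and second
moment `⟨A²⟩ + ⟨B²⟩ - 2⟨A⟩⟨B⟩` (the means are real since `A`, `B` are Hermitian), so its variance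
is exactly `(ΔA)² + (ΔB)²`. The variance of `C` in the mixture `ρ` is the average second moment
minus the square of the average mean, and by Jensen the square of the average is at most the
average of the squares, so it dominates the average of the variances in the pure components.
-/

section ProductVector

variable {a b : Type*}

lemma star_prodVec (u : a → ℂ) (v : b → ℂ) : star (prodVec u v) = prodVec (star u) (star v) := by
  ext x
  simp [prodVec]

variable [Fintype a] [Fintype b]

lemma prodVec_dotProduct_prodVec (u x : a → ℂ) (v y : b → ℂ) :
    prodVec u v ⬝ᵥ prodVec x y = (u ⬝ᵥ x) * (v ⬝ᵥ y) := by
  simp only [dotProduct, Fintype.sum_prod_type, prodVec, Finset.sum_mul_sum]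
  exact Finset.sum_congr rfl fun i _ => Finset.sum_congr rfl fun j _ => by ring

lemma kronecker_mulVec_prodVec {l m : Type*} (X : Matrix l a ℂ) (Y : Matrix m b ℂ)
    (u : a → ℂ) (v : b → ℂ) : (X ⊗ₖ Y) *ᵥ prodVec u v = prodVec (X *ᵥ u) (Y *ᵥ v) := by
  ext ⟨i, j⟩
  simp only [mulVec, dotProduct, Fintype.sum_prod_type, prodVec, kroneckerMap_apply,
    Finset.sum_mul_sum]
  exact Finset.sum_congr rfl fun k _ => Finset.sum_congr rfl fun l _ => by ring

lemma star_prodVec_dotProduct_kronecker_mulVec (X : Matrix a a ℂ) (Y : Matrix b b ℂ)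
    (u : a → ℂ) (v : b → ℂ) :
    star (prodVec u v) ⬝ᵥ (X ⊗ₖ Y) *ᵥ prodVec u v = (star u ⬝ᵥ X *ᵥ u) * (star v ⬝ᵥ Y *ᵥ v) := by
  rw [kronecker_mulVec_prodVec, star_prodVec, prodVec_dotProduct_prodVec]

theorem varV_prodVec_kronecker_sub [DecidableEq a] [DecidableEq b] {u : a → ℂ} {v : b → ℂ}
    (hu : star u ⬝ᵥ u = 1) (hv : star v ⬝ᵥ v = 1) {A : Matrix a a ℂ} {B : Matrix b b ℂ}
    (hA : A.IsHermitian) (hB : B.IsHermitian) :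
    varV (prodVec u v) (A ⊗ₖ 1 - 1 ⊗ₖ B) = varV u A + varV v B := by
  have hsq : (A ⊗ₖ 1 - 1 ⊗ₖ B) * (A ⊗ₖ 1 - 1 ⊗ₖ B)
      = (A * A) ⊗ₖ (1 : Matrix b b ℂ) - A ⊗ₖ B - A ⊗ₖ B + (1 : Matrix a a ℂ) ⊗ₖ (B * B) := by
    simp only [sub_mul, mul_sub, ← mul_kronecker_mul, one_mul, mul_one]
    abel
  have hA_im := hA.im_star_dotProduct_mulVec_self u
  have hB_im := hB.im_star_dotProduct_mulVec_self v
  simp only [varV, hsq, sub_mulVec, add_mulVec, dotProduct_sub, dotProduct_add,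
    star_prodVec_dotProduct_kronecker_mulVec, one_mulVec, hu, hv]
  simp only [RCLike.im_to_complex] at hA_im hB_im
  simp only [Complex.add_re, Complex.sub_re, Complex.mul_re, hA_im, hB_im, Complex.one_re,
    Complex.one_im]
  ring

end ProductVector

section Mixture

variable {ι n : Type*} [Fintype ι] [Fintype n]

lemma trace_mixture_mul (p : ι → ℝ) (ψ : ι → n → ℂ) (X : Matrix n n ℂ) :
    ((∑ k, (p k : ℂ) • vecMulVec (ψ k) (star (ψ k))) * X).trace
      = ∑ k, (p k : ℂ) * (star (ψ k) ⬝ᵥ X *ᵥ ψ k) := by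
  simp only [Finset.sum_mul, trace_sum, smul_mul_assoc, trace_smul, vecMulVec_mul,
    trace_vecMulVec, smul_eq_mul, dotProduct_mulVec, dotProduct_comm (ψ _)]

theorem sum_mul_varV_le_varM {p : ι → ℝ} (hp : ∀ k, 0 ≤ p k) (hp1 : ∑ k, p k = 1)
    (ψ : ι → n → ℂ) (C : Matrix n n ℂ) :
    ∑ k, p k * varV (ψ k) C ≤ varM (∑ k, (p k : ℂ) • vecMulVec (ψ k) (star (ψ k))) C := by
  set x : ι → ℝ := fun k => (star (ψ k) ⬝ᵥ C *ᵥ ψ k).re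
  have jensen : (∑ k, p k * x k) ^ 2 ≤ ∑ k, p k * x k ^ 2 := by
    simpa [smul_eq_mul] using
      even_two.convexOn_pow.map_sum_le (t := Finset.univ) (fun k _ => hp k) hp1
        (p := x) (fun k _ => Set.mem_univ (x k))
  have re_trace : ∀ X, ((∑ k, (p k : ℂ) • vecMulVec (ψ k) (star (ψ k))) * X).trace.re
      = ∑ k, p k * (star (ψ k) ⬝ᵥ X *ᵥ ψ k).re := fun X => by
    simp only [trace_mixture_mul, Complex.re_sum, Complex.re_ofReal_mul]
  rw [varM, mul_assoc, re_trace, re_trace]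
  simp only [varV, mul_sub, Finset.sum_sub_distrib]
  linarith

end Mixture

/-- for a separable state `ρ = Σ_k p_k |e_k⟩⟨e_k| ⊗ |f_k⟩⟨f_k|`,
`Σ_k p_k [(ΔA)²_{e_k} + (ΔB)²_{f_k}] ≤ Δ(A⊗I − I⊗B)²_ρ`. -/
theorem separable_variance_bound {a b : Type*} [Fintype a] [Fintype b]
    [DecidableEq a] [DecidableEq b]
    {M : ℕ} (p : Fin M → ℝ) (hp : ∀ k, 0 ≤ p k) (hp1 : ∑ k, p k = 1)
    (e : Fin M → a → ℂ) (f : Fin M → b → ℂ)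
    (he : ∀ k, star (e k) ⬝ᵥ e k = 1) (hf : ∀ k, star (f k) ⬝ᵥ f k = 1)
    (ρ : Matrix (a × b) (a × b) ℂ)
    (hρ : ρ = ∑ k, (p k : ℂ) •
      vecMulVec (prodVec (e k) (f k)) (star (prodVec (e k) (f k))))
    (A : Matrix a a ℂ) (B : Matrix b b ℂ) (hA : A.IsHermitian) (hB : B.IsHermitian) :
    ∑ k, p k * (varV (e k) A + varV (f k) B) ≤
      varM ρ (A ⊗ₖ (1 : Matrix b b ℂ) - (1 : Matrix a a ℂ) ⊗ₖ B) := by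
  subst hρ
  simp_rw [← varV_prodVec_kronecker_sub (he _) (hf _) hA hB]
  exact sum_mul_varV_le_varM hp hp1 _ _
end

section
/- Theorem 1: For any separable bipartite state ρ = Σ_k p_k |e_k⟩⟨e_k| ⊗ |f_k⟩⟨f_k| and Hermitian observables A, B, the quantum Fisher information satisfies F(ρ, A⊗I + I⊗B) ≤ Δ(A⊗I − I⊗B)²_ρ. -/
open Matrix Kronecker

/-- trace of |ψ⟩⟨ψ| C equals ⟨ψ|C|ψ⟩ -/
lemma trace_vmv {n : Type*} [Fintype n] (ψ : n → ℂ) (C : Matrix n n ℂ) :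
    (vecMulVec ψ (star ψ) * C).trace = star ψ ⬝ᵥ C.mulVec ψ := by
  simp only [trace, diag, mul_apply, vecMulVec_apply, dotProduct, mulVec, Pi.star_apply]
  rw [Finset.sum_comm]
  simp [Finset.mul_sum]
  congr 1; ext j; congr 1; ext i; ring

/-- expectation of a Kronecker product in a product vector factorizes -/
lemma prod_dot {a b : Type*} [Fintype a] [Fintype b] (e : a → ℂ) (f : b → ℂ)
    (X : Matrix a a ℂ) (Y : Matrix b b ℂ) :
    star (prodVec e f) ⬝ᵥ (X ⊗ₖ Y).mulVec (prodVec e f)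
      = (star e ⬝ᵥ X.mulVec e) * (star f ⬝ᵥ Y.mulVec f) := by
  simp only [dotProduct, mulVec, kroneckerMap_apply, prodVec, Pi.star_apply,
    Fintype.sum_prod_type, Finset.mul_sum, Finset.sum_mul]
  conv_lhs => enter [2, x]; rw [Finset.sum_comm]
  conv_rhs => enter [2, x]; rw [Finset.sum_comm]
  conv_rhs => rw [Finset.sum_comm]
  conv_rhs => enter [2, x, 2, y]; rw [Finset.sum_comm]
  conv_rhs => enter [2, x]; rw [Finset.sum_comm]
  refine Finset.sum_congr rfl fun i _ => Finset.sum_congr rfl fun k _ =>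
    Finset.sum_congr rfl fun j _ => Finset.sum_congr rfl fun l _ => ?_
  simp only [star_mul']; ring

/-- expectation of a Hermitian matrix is real -/
lemma herm_im {n : Type*} [Fintype n] {A : Matrix n n ℂ} (hA : A.IsHermitian) (v : n → ℂ) :
    (star v ⬝ᵥ A.mulVec v).im = 0 := by
  have h : star (star v ⬝ᵥ A.mulVec v) = star v ⬝ᵥ A.mulVec v := by
    simp only [dotProduct, mulVec, star_sum, star_mul', Pi.star_apply, star_star, Finset.mul_sum]
    rw [Finset.sum_comm]
    refine Finset.sum_congr rfl fun i _ => Finset.sum_congr rfl fun j _ => ?_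
    have h3 := hA.apply i j
    rw [h3]
    ring
  have h2 := congrArg Complex.im h
  simp only [Complex.star_def, Complex.conj_im] at h2
  linarith

/-- Jensen / Cauchy-Schwarz : (Σ p m)² ≤ Σ p m² for a probability vector p -/
lemma jensen_sq {M : ℕ} (p m : Fin M → ℝ) (hp : ∀ k, 0 ≤ p k) (hp1 : ∑ k, p k = 1) :
    (∑ k, p k * m k) ^ 2 ≤ ∑ k, p k * m k ^ 2 := by
  have h := Finset.sum_mul_sq_le_sq_mul_sq Finset.univ (fun k => Real.sqrt (p k))
    (fun k => Real.sqrt (p k) * m k)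
  have e1 : ∀ k : Fin M, Real.sqrt (p k) * (Real.sqrt (p k) * m k) = p k * m k := by
    intro k; rw [← mul_assoc, Real.mul_self_sqrt (hp k)]
  have e2 : ∀ k : Fin M, Real.sqrt (p k) ^ 2 = p k := fun k => Real.sq_sqrt (hp k)
  have e3 : ∀ k : Fin M, (Real.sqrt (p k) * m k) ^ 2 = p k * m k ^ 2 := by
    intro k; rw [mul_pow, e2]
  calc (∑ k, p k * m k) ^ 2 = (∑ k, Real.sqrt (p k) * (Real.sqrt (p k) * m k)) ^ 2 := by
        rw [Finset.sum_congr rfl fun k _ => (e1 k).symm]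
    _ ≤ (∑ k, Real.sqrt (p k) ^ 2) * ∑ k, (Real.sqrt (p k) * m k) ^ 2 := h
    _ = ∑ k, p k * m k ^ 2 := by
        rw [Finset.sum_congr rfl fun k _ => e2 k, Finset.sum_congr rfl fun k _ => e3 k, hp1,
          one_mul]

/-- concavity of the variance: mixed-state variance dominates average pure variance -/
lemma varM_ge {n : Type*} [Fintype n] {M : ℕ} (p : Fin M → ℝ) (hp : ∀ k, 0 ≤ p k)
    (hp1 : ∑ k, p k = 1) (ψ : Fin M → n → ℂ)
    (ρ : Matrix n n ℂ) (hρ : ρ = ∑ k, (p k : ℂ) • vecMulVec (ψ k) (star (ψ k)))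
    (C : Matrix n n ℂ) :
    ∑ k, p k * varV (ψ k) C ≤ varM ρ C := by
  have htr : ∀ D : Matrix n n ℂ, ((ρ * D).trace).re = ∑ k, p k * (star (ψ k) ⬝ᵥ D.mulVec (ψ k)).re := by
    intro D
    rw [hρ, Finset.sum_mul, trace_sum]
    rw [Complex.re_sum]
    refine Finset.sum_congr rfl fun k _ => ?_
    rw [smul_mul_assoc, trace_smul, trace_vmv, smul_eq_mul, Complex.re_ofReal_mul]
  have h2 : ((ρ * C * C).trace).re = ∑ k, p k * (star (ψ k) ⬝ᵥ (C * C).mulVec (ψ k)).re := by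
    rw [mul_assoc]; exact htr (C * C)
  have h1 : ((ρ * C).trace).re = ∑ k, p k * (star (ψ k) ⬝ᵥ C.mulVec (ψ k)).re := htr C
  unfold varM varV
  rw [h1, h2]
  simp only [mul_sub]
  rw [Finset.sum_sub_distrib]
  have := jensen_sq p (fun k => (star (ψ k) ⬝ᵥ C.mulVec (ψ k)).re) hp hp1
  linarith

/-- Theorem 1: for any separable bipartite state
`ρ = Σ_k p_k |e_k⟩⟨e_k| ⊗ |f_k⟩⟨f_k|` and Hermitian observables `A, B`, the quantum
Fisher information (any quantity `F` satisfying the convex-roof upper bound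
`F ≤ Σ q_k (ΔC)²_{ψ_k}` over all pure-state decompositions of `ρ`, for
`C = A⊗I + I⊗B`) satisfies `F(ρ, A⊗I + I⊗B) ≤ Δ(A⊗I − I⊗B)²_ρ`. -/
theorem separable_qfi_bound {a b : Type*} [Fintype a] [Fintype b]
    [DecidableEq a] [DecidableEq b]
    {M : ℕ} (p : Fin M → ℝ) (hp : ∀ k, 0 ≤ p k) (hp1 : ∑ k, p k = 1)
    (e : Fin M → a → ℂ) (f : Fin M → b → ℂ)
    (he : ∀ k, star (e k) ⬝ᵥ e k = 1) (hf : ∀ k, star (f k) ⬝ᵥ f k = 1)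
    (ρ : Matrix (a × b) (a × b) ℂ)
    (hρ : ρ = ∑ k, (p k : ℂ) •
      vecMulVec (prodVec (e k) (f k)) (star (prodVec (e k) (f k))))
    (A : Matrix a a ℂ) (B : Matrix b b ℂ) (hA : A.IsHermitian) (hB : B.IsHermitian)
    (F : ℝ)
    (hF : ∀ (K : ℕ) (q : Fin K → ℝ) (ψ : Fin K → a × b → ℂ),
      (∀ k, 0 ≤ q k) → (∑ k, q k = 1) → (∀ k, star (ψ k) ⬝ᵥ ψ k = 1) →
      ρ = ∑ k, (q k : ℂ) • vecMulVec (ψ k) (star (ψ k)) →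
      F ≤ ∑ k, q k * varV (ψ k) (A ⊗ₖ (1 : Matrix b b ℂ) + (1 : Matrix a a ℂ) ⊗ₖ B)) :
    F ≤ varM ρ (A ⊗ₖ (1 : Matrix b b ℂ) - (1 : Matrix a a ℂ) ⊗ₖ B) := by
  set ψ : Fin M → a × b → ℂ := fun k => prodVec (e k) (f k) with hψdef
  set Cp : Matrix (a × b) (a × b) ℂ := A ⊗ₖ (1 : Matrix b b ℂ) + (1 : Matrix a a ℂ) ⊗ₖ B with hCp
  set Cm : Matrix (a × b) (a × b) ℂ := A ⊗ₖ (1 : Matrix b b ℂ) - (1 : Matrix a a ℂ) ⊗ₖ B with hCm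
  -- normalization of the product vectors
  have hψnorm : ∀ k, star (ψ k) ⬝ᵥ ψ k = 1 := by
    intro k
    have h1 : star (ψ k) ⬝ᵥ ψ k
        = star (ψ k) ⬝ᵥ ((1 : Matrix a a ℂ) ⊗ₖ (1 : Matrix b b ℂ)).mulVec (ψ k) := by
      rw [Matrix.one_kronecker_one, Matrix.one_mulVec]
    rw [h1, hψdef, prod_dot, Matrix.one_mulVec, Matrix.one_mulVec, he k, hf k, one_mul]
  have h1 := hF M p ψ hp hp1 hψnorm hρ
  -- per-k equality of variances for C₊ and C₋
  have hvar : ∀ k, varV (ψ k) Cp = varV (ψ k) Cm := by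
    intro k
    have hCp2 : Cp * Cp = (A*A) ⊗ₖ 1 + (A ⊗ₖ B + A ⊗ₖ B) + 1 ⊗ₖ (B*B) := by
      rw [hCp]
      simp only [add_mul, mul_add, ← Matrix.mul_kronecker_mul, Matrix.one_mul, Matrix.mul_one]
      abel
    have hCm2 : Cm * Cm = (A*A) ⊗ₖ 1 - (A ⊗ₖ B + A ⊗ₖ B) + 1 ⊗ₖ (B*B) := by
      rw [hCm]
      simp only [sub_mul, mul_sub, ← Matrix.mul_kronecker_mul, Matrix.one_mul, Matrix.mul_one]
      abel
    set α : ℂ := star (e k) ⬝ᵥ A.mulVec (e k) with hα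
    set β : ℂ := star (f k) ⬝ᵥ B.mulVec (f k) with hβ
    have dA : star (ψ k) ⬝ᵥ (A ⊗ₖ (1 : Matrix b b ℂ)).mulVec (ψ k) = α := by
      rw [hψdef, prod_dot, Matrix.one_mulVec, hf k, mul_one]
    have dB : star (ψ k) ⬝ᵥ ((1 : Matrix a a ℂ) ⊗ₖ B).mulVec (ψ k) = β := by
      rw [hψdef, prod_dot, Matrix.one_mulVec, he k, one_mul]
    have dAB : star (ψ k) ⬝ᵥ (A ⊗ₖ B).mulVec (ψ k) = α * β := by
      rw [hψdef, prod_dot]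
    have dA2 : star (ψ k) ⬝ᵥ ((A*A) ⊗ₖ (1 : Matrix b b ℂ)).mulVec (ψ k)
        = star (e k) ⬝ᵥ (A*A).mulVec (e k) := by
      rw [hψdef, prod_dot, Matrix.one_mulVec, hf k, mul_one]
    have dB2 : star (ψ k) ⬝ᵥ ((1 : Matrix a a ℂ) ⊗ₖ (B*B)).mulVec (ψ k)
        = star (f k) ⬝ᵥ (B*B).mulVec (f k) := by
      rw [hψdef, prod_dot, Matrix.one_mulVec, he k, one_mul]
    have m1p : star (ψ k) ⬝ᵥ Cp.mulVec (ψ k) = α + β := by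
      rw [hCp, Matrix.add_mulVec, dotProduct_add, dA, dB]
    have m1m : star (ψ k) ⬝ᵥ Cm.mulVec (ψ k) = α - β := by
      rw [hCm, Matrix.sub_mulVec, dotProduct_sub, dA, dB]
    have m2p : star (ψ k) ⬝ᵥ (Cp * Cp).mulVec (ψ k)
        = star (e k) ⬝ᵥ (A*A).mulVec (e k) + (α * β + α * β)
          + star (f k) ⬝ᵥ (B*B).mulVec (f k) := by
      rw [hCp2, Matrix.add_mulVec, Matrix.add_mulVec, Matrix.add_mulVec, dotProduct_add,
        dotProduct_add, dotProduct_add, dA2, dAB, dB2]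
    have m2m : star (ψ k) ⬝ᵥ (Cm * Cm).mulVec (ψ k)
        = star (e k) ⬝ᵥ (A*A).mulVec (e k) - (α * β + α * β)
          + star (f k) ⬝ᵥ (B*B).mulVec (f k) := by
      rw [hCm2, Matrix.add_mulVec, Matrix.sub_mulVec, Matrix.add_mulVec, dotProduct_add,
        dotProduct_sub, dotProduct_add, dA2, dAB, dB2]
    have hαim : α.im = 0 := herm_im hA (e k)
    have hβim : β.im = 0 := herm_im hB (f k)
    unfold varV
    rw [m1p, m1m, m2p, m2m]
    simp only [Complex.add_re, Complex.sub_re, Complex.mul_re, hαim, hβim, mul_zero, sub_zero]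
    ring
  have h2 : ∑ k, p k * varV (ψ k) Cp = ∑ k, p k * varV (ψ k) Cm :=
    Finset.sum_congr rfl fun k _ => by rw [hvar k]
  have h3 := varM_ge p hp hp1 ψ ρ hρ Cm
  calc F ≤ ∑ k, p k * varV (ψ k) Cp := h1
    _ = ∑ k, p k * varV (ψ k) Cm := h2
    _ ≤ varM ρ Cm := h3
end

section
/- For any density matrix ρ and Hermitian observable C, the quantum Fisher information is bounded above by the variance: F(ρ,C) ≤ Δ(C)²_ρ = Tr(ρC²) − (Tr(ρC))². -/
open Matrix

noncomputable def qfiS {n : Type*} [Fintype n] (lam : n → ℝ) (v : n → n → ℂ)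
    (A : Matrix n n ℂ) : ℝ :=
  ∑ k, ∑ l, if lam k + lam l ≠ 0 then
    (lam k - lam l) ^ 2 / (2 * (lam k + lam l)) *
      Complex.normSq (star (v k) ⬝ᵥ A.mulVec (v l))
  else 0

lemma sum_matrix_mulVec {n m : Type*} [Fintype n] [Fintype m] (A : m → Matrix n n ℂ)
    (w : n → ℂ) : (∑ i, A i).mulVec w = ∑ i, (A i).mulVec w := by
  ext j
  simp only [mulVec, dotProduct, Finset.sum_apply, Matrix.sum_apply, Finset.sum_mul]
  exact Finset.sum_comm

lemma vecMulVec_mulVec' {n : Type*} [Fintype n] (x y w : n → ℂ) :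
    (vecMulVec x y).mulVec w = (y ⬝ᵥ w) • x := by
  ext i
  simp [mulVec, dotProduct, vecMulVec_apply, Finset.mul_sum, mul_assoc, mul_comm, mul_left_comm]

lemma trace_vecMulVec_mul {n : Type*} [Fintype n] (x y : n → ℂ) (M : Matrix n n ℂ) :
    (vecMulVec x y * M).trace = y ⬝ᵥ M.mulVec x := by
  simp only [trace, diag_apply, mul_apply, vecMulVec_apply, dotProduct, mulVec, Finset.mul_sum]
  rw [Finset.sum_comm]
  exact Finset.sum_congr rfl fun j _ => Finset.sum_congr rfl fun i _ => by ring

/-- for any density matrix `ρ` (with spectral decomposition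
`ρ = Σ λ_k |v_k⟩⟨v_k|`) and Hermitian observable `C`, the quantum Fisher information
is bounded above by the variance: `F(ρ,C) ≤ Tr(ρC²) − (Tr(ρC))²`. -/
theorem qfi_le_variance {n : Type*} [Fintype n] [DecidableEq n]
    (lam : n → ℝ) (hlam : ∀ k, 0 ≤ lam k) (hlam1 : ∑ k, lam k = 1)
    (v : n → n → ℂ) (hv : ∀ k l, star (v k) ⬝ᵥ v l = if k = l then 1 else 0)
    (ρ : Matrix n n ℂ) (hρ : ρ = ∑ k, (lam k : ℂ) • vecMulVec (v k) (star (v k)))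
    (C : Matrix n n ℂ) (hC : C.IsHermitian) :
    qfiS lam v C ≤ varM ρ C := by
  classical
  set a : n → n → ℂ := fun k l => star (v k) ⬝ᵥ C.mulVec (v l) with ha
  have herm : ∀ k l, a l k = (starRingEnd ℂ) (a k l) := by
    intro k l
    rw [ha]
    calc star (v l) ⬝ᵥ C *ᵥ v k
        = star (star (C *ᵥ v k) ⬝ᵥ v l) := star_dotProduct _ _
      _ = star ((star (v k) ᵥ* Cᴴ) ⬝ᵥ v l) := by rw [star_mulVec]
      _ = star (star (v k) ⬝ᵥ Cᴴ *ᵥ v l) := by rw [dotProduct_mulVec]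
      _ = (starRingEnd ℂ) (a k l) := by rw [hC.eq]; rfl
  have hcomp : ∑ m, vecMulVec (v m) (star (v m)) = (1 : Matrix n n ℂ) := by
    set U : Matrix n n ℂ := Matrix.of (fun i k => v k i) with hU
    have h1 : Uᴴ * U = 1 := by
      ext k l
      simpa [mul_apply, conjTranspose_apply, dotProduct, Matrix.one_apply, hU,
        mul_comm] using hv k l
    have h2 : U * Uᴴ = 1 := mul_eq_one_comm.mp h1
    rw [← h2]
    ext i j
    simp [Matrix.sum_apply, mul_apply, vecMulVec_apply, conjTranspose_apply, hU]
  have hres : ∀ w : n → ℂ, w = ∑ m, (star (v m) ⬝ᵥ w) • v m := by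
    intro w
    have h3 := congrArg (fun M : Matrix n n ℂ => M.mulVec w) hcomp
    simp only [sum_matrix_mulVec, vecMulVec_mulVec', one_mulVec] at h3
    exact h3.symm
  have hdot : ∀ (u : n → ℂ) (c : n → ℂ) (w : n → n → ℂ),
      u ⬝ᵥ (∑ x, c x • w x) = ∑ x, c x * (u ⬝ᵥ w x) := by
    intro u c w
    simp only [dotProduct, Finset.sum_apply, Pi.smul_apply, smul_eq_mul, Finset.mul_sum]
    rw [Finset.sum_comm]
    exact Finset.sum_congr rfl fun x _ => Finset.sum_congr rfl fun i _ => by ring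
  have prod : ∀ k, star (v k) ⬝ᵥ (C * C).mulVec (v k) = ∑ m, a k m * a m k := by
    intro k
    rw [← mulVec_mulVec]
    conv_lhs => rw [hres (C.mulVec (v k))]
    have h4 : C.mulVec (∑ m, (star (v m) ⬝ᵥ C.mulVec (v k)) • v m)
        = ∑ m, (star (v m) ⬝ᵥ C.mulVec (v k)) • C.mulVec (v m) := by
      show C.mulVecLin _ = _
      rw [map_sum]
      exact Finset.sum_congr rfl fun m _ => by rw [LinearMap.map_smul]; rfl
    rw [h4, hdot]
    exact Finset.sum_congr rfl fun m _ => by rw [ha]; ring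
  -- trace formula
  have tr : ∀ M : Matrix n n ℂ, (ρ * M).trace
      = ∑ k, (lam k : ℂ) * (star (v k) ⬝ᵥ M.mulVec (v k)) := by
    intro M
    rw [hρ, Finset.sum_mul, trace_sum]
    refine Finset.sum_congr rfl fun k _ => ?_
    rw [smul_mul_assoc, trace_smul, trace_vecMulVec_mul, smul_eq_mul]
  -- real trace values
  set c : ℝ := ∑ k, lam k * (a k k).re with hc
  have tr1 : ((ρ * C).trace).re = c := by
    rw [tr C, Complex.re_sum]
    exact Finset.sum_congr rfl fun k _ => by
      rw [ha]; simp [Complex.mul_re]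
  have tr2 : ((ρ * C * C).trace).re = ∑ k, ∑ m, lam k * Complex.normSq (a k m) := by
    rw [mul_assoc, tr (C * C), Complex.re_sum]
    refine Finset.sum_congr rfl fun k _ => ?_
    rw [prod k]
    have h5 : ∑ m, a k m * a m k = ((∑ m, Complex.normSq (a k m) : ℝ) : ℂ) := by
      push_cast
      exact Finset.sum_congr rfl fun m _ => by rw [herm k m, Complex.mul_conj]
    rw [h5, ← Complex.ofReal_mul, Complex.ofReal_re, Finset.mul_sum]
  -- variance in terms of a
  have hvar : varM ρ C = (∑ k, ∑ m, lam k * Complex.normSq (a k m)) - c ^ 2 := by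
    rw [varM, tr1, tr2]
  -- shifted matrix b
  set b : n → n → ℂ := fun k l => a k l - (if k = l then (c : ℂ) else 0) with hb
  have hbnorm : ∀ k l, Complex.normSq (b k l)
      = Complex.normSq (a k l) + (if k = l then c ^ 2 - 2 * c * (a k l).re else 0) := by
    intro k l
    by_cases hkl : k = l
    · simp only [hb, hkl, if_pos rfl, if_true]
      simp [Complex.normSq_apply, Complex.sub_re, Complex.sub_im, Complex.ofReal_re,
        Complex.ofReal_im]
      ring
    · simp [hb, hkl]
  have hbsymm : ∀ k l, Complex.normSq (b l k) = Complex.normSq (b k l) := by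
    intro k l
    have : b l k = (starRingEnd ℂ) (b k l) := by
      simp only [hb, map_sub, herm k l]
      congr 1
      rcases eq_or_ne k l with h | h
      · subst h; simp
      · rw [if_neg h, if_neg (Ne.symm h)]; simp
    rw [this, Complex.normSq_conj]
  -- key identity: symmetrized sum equals variance
  have key : ∑ k, ∑ l, (lam k + lam l) / 2 * Complex.normSq (b k l) = varM ρ C := by
    have swap : ∑ k, ∑ l, lam l * Complex.normSq (b k l)
        = ∑ k, ∑ l, lam k * Complex.normSq (b k l) := by
      rw [Finset.sum_comm]
      exact Finset.sum_congr rfl fun k _ => Finset.sum_congr rfl fun l _ => by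
        rw [hbsymm]
    have half : ∑ k, ∑ l, (lam k + lam l) / 2 * Complex.normSq (b k l)
        = ∑ k, ∑ l, lam k * Complex.normSq (b k l) := by
      have expand : ∀ k l, (lam k + lam l) / 2 * Complex.normSq (b k l)
          = (lam k * Complex.normSq (b k l)) / 2 + (lam l * Complex.normSq (b k l)) / 2 := by
        intro k l; ring
      simp only [expand, Finset.sum_add_distrib, ← Finset.sum_div]
      rw [swap]
      ring
    rw [half, hvar]
    have main : ∑ k, ∑ l, lam k * Complex.normSq (b k l)
        = (∑ k, ∑ l, lam k * Complex.normSq (a k l))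
          + ∑ k, lam k * (c ^ 2 - 2 * c * (a k k).re) := by
      rw [← Finset.sum_add_distrib]
      refine Finset.sum_congr rfl fun k _ => ?_
      simp only [hbnorm, mul_add, Finset.sum_add_distrib]
      congr 1
      rw [← Finset.mul_sum, Finset.sum_ite_eq]
      simp
    rw [main]
    have tail : ∑ k, lam k * (c ^ 2 - 2 * c * (a k k).re) = - c ^ 2 := by
      have : ∀ k, lam k * (c ^ 2 - 2 * c * (a k k).re)
          = c ^ 2 * lam k - 2 * c * (lam k * (a k k).re) := by intro k; ring
      simp only [this, Finset.sum_sub_distrib, ← Finset.mul_sum, hlam1, ← hc]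
      ring
    rw [tail]
    ring
  -- termwise inequality
  rw [← key, qfiS]
  refine Finset.sum_le_sum fun k _ => Finset.sum_le_sum fun l _ => ?_
  have hrhs : 0 ≤ (lam k + lam l) / 2 * Complex.normSq (b k l) :=
    mul_nonneg (div_nonneg (add_nonneg (hlam k) (hlam l)) (by norm_num))
      (Complex.normSq_nonneg _)
  by_cases hne : lam k + lam l ≠ 0
  · rw [if_pos hne]
    by_cases hkl : k = l
    · subst hkl
      simpa using hrhs
    · have hbkl : b k l = a k l := by simp [hb, hkl]
      have hs : 0 < lam k + lam l :=
        lt_of_le_of_ne (add_nonneg (hlam k) (hlam l)) (Ne.symm hne)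
      have hsq : (lam k - lam l) ^ 2 ≤ (lam k + lam l) ^ 2 := by
        apply sq_le_sq'
        · nlinarith [hlam k, hlam l]
        · nlinarith [hlam k, hlam l]
      have hdiv : (lam k - lam l) ^ 2 / (2 * (lam k + lam l)) ≤ (lam k + lam l) / 2 := by
        rw [div_le_iff₀ (by linarith)]
        nlinarith
      rw [hbkl]
      exact mul_le_mul_of_nonneg_right hdiv (Complex.normSq_nonneg _)
  · rw [if_neg hne]
    exact hrhs
end

section
/- For the noisy state ρ(p) = p|ψ⟩⟨ψ| + (1−p)·I/D (with D the total dimension and 0 ≤ p ≤ 1) and any Hermitian traceless-compatible observable A, the quantum Fisher information equals F(ρ(p), A) = p²/(p + 2(1−p)/D) · F(|ψ⟩⟨ψ|, A), where F(|ψ⟩⟨ψ|, A) = 4·[⟨ψ|A²|ψ⟩ − ⟨ψ|A|ψ⟩²] under the convention F(ρ,A) = Σ 2(λ_k−λ_l)²/(λ_k+λ_l)|⟨k|A|l⟩|²; equivalently, with the paper's normalization, F(ρ(p),A) = p²/(p+2(1−p)/D)·(ΔA)²_{|ψ⟩}. -/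
open Matrix

/-- for the noisy state `ρ(p) = p|ψ⟩⟨ψ| + (1−p)I/D` (eigenvalue
`p + (1−p)/D` on `|ψ⟩` and `(1−p)/D` on the orthogonal complement), the quantum
Fisher information satisfies
`F(ρ(p), A) = p²/(p + 2(1−p)/D) · (ΔA)²_{|ψ⟩}` in the paper's normalization. -/
theorem qfi_noisy_state {n : Type*} [Fintype n] [DecidableEq n]
    (D : ℕ) (hD : D = Fintype.card n)
    (p : ℝ) (hp0 : 0 ≤ p) (hp1 : p ≤ 1)
    (A : Matrix n n ℂ) (hA : A.IsHermitian)
    (v : n → n → ℂ) (hv : ∀ k l, star (v k) ⬝ᵥ v l = if k = l then 1 else 0)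
    (k₀ : n) (ψ : n → ℂ) (hψ : v k₀ = ψ)
    (lam : n → ℝ)
    (hlam : ∀ k, lam k = if k = k₀ then p + (1 - p) / D else (1 - p) / D) :
    qfiS lam v A = p ^ 2 / (p + 2 * (1 - p) / D) * varV ψ A := by
  classical
  haveI : Nonempty n := ⟨k₀⟩
  have hDpos : 0 < D := hD ▸ Fintype.card_pos
  have hDR : (0:ℝ) < (D:ℝ) := by exact_mod_cast hDpos
  set t : ℝ := (1 - p) / (D:ℝ) with ht
  have htnn : 0 ≤ t := div_nonneg (by linarith) hDR.le
  set q : ℝ := p + 2 * (1 - p) / (D:ℝ) with hqdef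
  have hq2 : q = p + 2 * t := by rw [hqdef, ht]; ring
  have hqpos : 0 < q := by
    rcases lt_or_eq_of_le hp0 with h | h
    · have : 0 ≤ 2 * (1 - p) / D := div_nonneg (by linarith) hDR.le
      rw [hqdef]; linarith
    · rw [hqdef, ← h]; norm_num; positivity
  -- resolution of identity
  have hres : ∀ i j, (∑ k, v k i * (starRingEnd ℂ) (v k j)) = if i = j then 1 else 0 := by
    have hU1 : (Matrix.of fun i k => v k i)ᴴ * (Matrix.of fun i k => v k i) = 1 := by
      ext k l
      simpa [Matrix.mul_apply, Matrix.conjTranspose_apply, Matrix.one_apply, dotProduct]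
        using hv k l
    have hU2 := mul_eq_one_comm.mp hU1
    intro i j
    have := congrFun (congrFun hU2 i) j
    simpa [Matrix.mul_apply, Matrix.conjTranspose_apply, Matrix.one_apply] using this
  have hAe : ∀ i j, (starRingEnd ℂ) (A i j) = A j i := fun i j => hA.apply j i
  -- set d := row vector star ψ * A
  set d : n → ℂ := fun i => ((star ψ) ᵥ* A) i with hd
  have hcd : ∀ w : n → ℂ, star ψ ⬝ᵥ A *ᵥ w = d ⬝ᵥ w := fun w => dotProduct_mulVec _ _ _
  have hdconj : ∀ i, (starRingEnd ℂ) (d i) = (A *ᵥ ψ) i := by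
    intro i
    simp only [hd, Matrix.vecMul, Matrix.mulVec, dotProduct, map_sum, _root_.map_mul,
      Pi.star_apply, Complex.star_def, Complex.conj_conj, hAe]
    exact Finset.sum_congr rfl fun j _ => mul_comm _ _
  -- sum of |⟨ψ|A|v l⟩|² over l
  have hSc : ∑ l, ((Complex.normSq (d ⬝ᵥ v l) : ℂ)) = ∑ i, (Complex.normSq (d i) : ℂ) := by
    simp only [← Complex.mul_conj]
    calc ∑ l, (d ⬝ᵥ v l) * (starRingEnd ℂ) (d ⬝ᵥ v l)
        = ∑ l, ∑ i, ∑ j, (d i * (starRingEnd ℂ) (d j)) * (v l i * (starRingEnd ℂ) (v l j)) := by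
          refine Finset.sum_congr rfl fun l _ => ?_
          simp only [dotProduct, map_sum, _root_.map_mul, Finset.sum_mul_sum]
          exact Finset.sum_congr rfl fun i _ => Finset.sum_congr rfl fun j _ => by ring
      _ = ∑ i, ∑ j, (d i * (starRingEnd ℂ) (d j)) * ∑ l, (v l i * (starRingEnd ℂ) (v l j)) := by
          rw [Finset.sum_comm]
          refine Finset.sum_congr rfl fun i _ => ?_
          rw [Finset.sum_comm]
          refine Finset.sum_congr rfl fun j _ => ?_
          rw [Finset.mul_sum]
      _ = ∑ i, d i * (starRingEnd ℂ) (d i) := by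
          simp [hres, mul_ite, mul_one, mul_zero, Finset.sum_ite_eq]
  have hA2 : star ψ ⬝ᵥ (A * A) *ᵥ ψ = ∑ i, (Complex.normSq (d i) : ℂ) := by
    rw [← Matrix.mulVec_mulVec, hcd]
    simp only [dotProduct, ← hdconj, Complex.mul_conj]
  have hSreal : ∑ l, Complex.normSq (d ⬝ᵥ v l) = (star ψ ⬝ᵥ (A * A) *ᵥ ψ).re := by
    have := congrArg Complex.re (hSc.trans hA2.symm)
    simpa using this
  -- the mean value is real
  have hmean : star ψ ⬝ᵥ A *ᵥ ψ = d ⬝ᵥ ψ := hcd ψ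
  have hmconj : (starRingEnd ℂ) (d ⬝ᵥ ψ) = d ⬝ᵥ ψ := by
    have h1 : (starRingEnd ℂ) (d ⬝ᵥ ψ) = ∑ i, (A *ᵥ ψ) i * (starRingEnd ℂ) (ψ i) := by
      simp [dotProduct, map_sum, hdconj]
    rw [h1, ← hmean]
    simp only [dotProduct, mulVec, Pi.star_apply, Complex.star_def]
    exact Finset.sum_congr rfl fun i _ => mul_comm _ _
  have hmim : (d ⬝ᵥ ψ).im = 0 := Complex.conj_eq_iff_im.mp hmconj
  have hm0 : Complex.normSq (d ⬝ᵥ ψ) = ((star ψ ⬝ᵥ A *ᵥ ψ).re) ^ 2 := by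
    rw [hmean, Complex.normSq_apply, hmim]; ring
  -- conjugate symmetry of the matrix element
  have hconjel : ∀ k, star (v k) ⬝ᵥ A *ᵥ ψ = (starRingEnd ℂ) (star ψ ⬝ᵥ A *ᵥ (v k)) := by
    intro k
    simp only [dotProduct, mulVec, map_sum, _root_.map_mul, Pi.star_apply, Complex.star_def,
      Complex.conj_conj, hAe, Finset.mul_sum]
    rw [Finset.sum_comm]
    exact Finset.sum_congr rfl fun i _ => Finset.sum_congr rfl fun j _ => by ring
  -- pointwise identity for the qfi sum
  have hqne : p + t + t ≠ 0 := by rw [show p + t + t = q by rw [hq2]; ring]; exact hqpos.ne'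
  have hterm : ∀ k l, (if lam k + lam l ≠ 0 then
      (lam k - lam l) ^ 2 / (2 * (lam k + lam l)) *
        Complex.normSq (star (v k) ⬝ᵥ A *ᵥ (v l)) else 0)
      = (if k = k₀ ∧ l ≠ k₀ then p ^ 2 / (2 * q) * Complex.normSq (d ⬝ᵥ v l) else 0)
      + (if k ≠ k₀ ∧ l = k₀ then p ^ 2 / (2 * q) * Complex.normSq (d ⬝ᵥ v k) else 0) := by
    intro k l
    by_cases hk : k = k₀ <;> by_cases hl : l = k₀
    · simp [hk, hl, hlam, ← ht]
    · have hlam' : lam k - lam l = p ∧ lam k + lam l = p + t + t := by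
        constructor <;> simp [hlam, hk, hl, ← ht] <;> ring
      rw [hlam'.1, hlam'.2, if_pos hqne]
      have : star (v k) ⬝ᵥ A *ᵥ (v l) = d ⬝ᵥ v l := by rw [hk, hψ]; exact hcd _
      rw [this]
      simp [hk, hl, show p + t + t = q by rw [hq2]; ring]
    · have hlam' : lam k - lam l = -p ∧ lam k + lam l = p + t + t := by
        constructor <;> simp [hlam, hk, hl, ← ht] <;> ring
      rw [hlam'.1, hlam'.2, if_pos hqne]
      have : star (v k) ⬝ᵥ A *ᵥ (v l) = (starRingEnd ℂ) (d ⬝ᵥ v k) := by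
        rw [hl, hψ, hconjel, hcd]
      rw [this, Complex.normSq_conj]
      simp [hk, hl, show p + t + t = q by rw [hq2]; ring]
    · simp [hlam, hk, hl, ← ht]
  -- now assemble
  have split : ∀ h : n → ℝ, (∑ l, if l ≠ k₀ then h l else 0) = (∑ l, h l) - h k₀ := by
    intro h
    have h1 : ∑ l, h l = (∑ l, if l ≠ k₀ then h l else 0) + ∑ l, (if l = k₀ then h l else 0) := by
      rw [← Finset.sum_add_distrib]
      refine Finset.sum_congr rfl fun l _ => ?_
      by_cases hl : l = k₀ <;> simp [hl]
    rw [h1, Finset.sum_ite_eq' Finset.univ k₀ h]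
    simp
  have e1 : qfiS lam v A
      = (∑ k, ∑ l, if k = k₀ ∧ l ≠ k₀ then p ^ 2 / (2 * q) * Complex.normSq (d ⬝ᵥ v l) else 0)
      + (∑ k, ∑ l, if k ≠ k₀ ∧ l = k₀ then p ^ 2 / (2 * q) * Complex.normSq (d ⬝ᵥ v k) else 0) := by
    rw [qfiS, ← Finset.sum_add_distrib]
    refine Finset.sum_congr rfl fun k _ => ?_
    rw [← Finset.sum_add_distrib]
    exact Finset.sum_congr rfl fun l _ => hterm k l
  have e2 : (∑ k, ∑ l, if k = k₀ ∧ l ≠ k₀ then p ^ 2 / (2 * q) * Complex.normSq (d ⬝ᵥ v l) else 0)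
      = p ^ 2 / (2 * q) * ((∑ l, Complex.normSq (d ⬝ᵥ v l)) - Complex.normSq (d ⬝ᵥ v k₀)) := by
    have : ∀ k, (∑ l, if k = k₀ ∧ l ≠ k₀ then p ^ 2 / (2 * q) * Complex.normSq (d ⬝ᵥ v l) else 0)
        = if k = k₀ then (∑ l, if l ≠ k₀ then p ^ 2 / (2 * q) * Complex.normSq (d ⬝ᵥ v l) else 0) else 0 := by
      intro k
      by_cases hk : k = k₀ <;> simp [hk]
    rw [Finset.sum_congr rfl fun k _ => this k, Finset.sum_ite_eq' Finset.univ k₀]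
    simp only [Finset.mem_univ, if_true]
    rw [split (fun l => p ^ 2 / (2 * q) * Complex.normSq (d ⬝ᵥ v l)), ← Finset.mul_sum]
    ring
  have e3 : (∑ k, ∑ l, if k ≠ k₀ ∧ l = k₀ then p ^ 2 / (2 * q) * Complex.normSq (d ⬝ᵥ v k) else 0)
      = p ^ 2 / (2 * q) * ((∑ k, Complex.normSq (d ⬝ᵥ v k)) - Complex.normSq (d ⬝ᵥ v k₀)) := by
    have : ∀ k, (∑ l, if k ≠ k₀ ∧ l = k₀ then p ^ 2 / (2 * q) * Complex.normSq (d ⬝ᵥ v k) else 0)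
        = if k ≠ k₀ then p ^ 2 / (2 * q) * Complex.normSq (d ⬝ᵥ v k) else 0 := by
      intro k
      by_cases hk : k = k₀ <;> simp [hk]
    rw [Finset.sum_congr rfl fun k _ => this k, split, ← Finset.mul_sum]
    ring
  have hvk0 : d ⬝ᵥ v k₀ = d ⬝ᵥ ψ := by rw [hψ]
  rw [e1, e2, e3, hSreal, hvk0, hm0, varV]
  field_simp
  ring
end
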